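/- Let σ be the k-simplex τ_k of a simplicial complex and consider D(τ̂₀…τ̂ₖ, Sd τ_k), the closed dual cell in the barycentric subdivision of τ_k of the simplex τ̂₀…τ̂ₖ (for a chain τ₀ < … < τ_k of faces). Then the open dual cell D̊(τ̂₀…τ̂ₖ, Sd τ_k) is PL-homeomorphic to the open simplex Δ̊^{|τ_k|−k} of dimension |τ_k| − k. -/

import Mathlib

attribute [local instance] Classical.propDecidable

/-- The barycenter of a face `s` of the standard `m`-simplex (spanned by the standard
basis vectors of ℝ^{m+1}). -/
noncomputable def faceBar (m : ℕ) (s : Finset (Fin (m + 1))) : Fin (m + 1) → ℝ :=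
  Finset.centroid ℝ s (fun i => (fun j => if j = i then (1 : ℝ) else 0))

/-- The barycenter of a simplex of the barycentric subdivision `Sd Δᵐ`
(given as a chain `c` of faces). -/
noncomputable def chainBar (m : ℕ) (c : Finset (Finset (Fin (m + 1)))) : Fin (m + 1) → ℝ :=
  Finset.centroid ℝ c (faceBar m)

/-- The open simplex spanned by a finite set of points: all strictly positive affine
combinations. -/
def openHullOf (m : ℕ) (t : Finset (Fin (m + 1) → ℝ)) : Set (Fin (m + 1) → ℝ) :=
  {x | ∃ w : (Fin (m + 1) → ℝ) → ℝ, (∀ p ∈ t, 0 < w p) ∧ (∑ p ∈ t, w p) = 1 ∧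
    (∑ p ∈ t, w p • p) = x}

/-- A simplex of the barycentric subdivision `Sd Δᵐ`: a nonempty chain of nonempty
faces. -/
def isSdSimplex (m : ℕ) (c : Finset (Finset (Fin (m + 1)))) : Prop :=
  c.Nonempty ∧ (∀ s ∈ c, s.Nonempty) ∧
    IsChain (· ⊆ ·) (↑c : Set (Finset (Fin (m + 1))))

/-- The open dual cell `D̊(ρ, Sd Δᵐ)` of a simplex `ρ` of `Sd Δᵐ`, realized in ℝ^{m+1}:
the union of the open simplices of `Sd(Sd Δᵐ)` spanned by barycenters of chains of
simplices of `Sd Δᵐ` with least element `ρ`. -/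
noncomputable def openDualCell (m : ℕ) (ρ : Finset (Finset (Fin (m + 1)))) :
    Set (Fin (m + 1) → ℝ) :=
  ⋃ (Cc : Finset (Finset (Finset (Fin (m + 1)))))
    (_ : Cc.Nonempty ∧ (∀ c ∈ Cc, isSdSimplex m c) ∧
      IsChain (· ⊆ ·) (↑Cc : Set (Finset (Finset (Fin (m + 1))))) ∧
      ρ ∈ Cc ∧ ∀ c ∈ Cc, ρ ⊆ c),
    openHullOf m (Cc.image (chainBar m))

/-- The open standard `l`-simplex. -/
def openStdSimplex (l : ℕ) : Set (Fin (l + 1) → ℝ) :=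
  {x | (∀ i, 0 < x i) ∧ ∑ i, x i = 1}

/-!
A point `p` of `Δᵐ` is read in the barycentric coordinates `sdCoord p` of `Sd Δᵐ`, which are
carried by the chain of superlevel sets of `p`. In these coordinates the open dual cell of a simplex
`ρ` of `Sd Δᵐ` is the set where the coordinates are equal on the vertices of `ρ` and strictly
smaller at all other vertices: the layer-cake decomposition of the coordinates exhibits the simplex
of `Sd (Sd Δᵐ)` carrying the point.

Stretching every coordinate off `ρ` from `[0, α)` to `[0, ∞)` opens the cell up into the cone over
the link of `ρ`. When `ρ` is the flag `τ₀ < ⋯ < τ_k = Δᵐ`, the points of that cone are the functions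
whose ranges on the blocks `τⱼ \ τⱼ₋₁` are stacked from the top down, each touching the next and
the last one ending at `0`. Such a function is determined by its values relative to one pivot per
block, which form an arbitrary vector of `ℝ^{(m+1)-(k+1)}`, and softmax maps `ℝ^{m-k}`
homeomorphically onto the open simplex.
-/

open Finset

section LayerCake

variable {α : Type*} [Fintype α]

/-- The largest element of `V` below `v`, and `0` if there is none. -/
noncomputable def prevValue (V : Finset ℝ) (v : ℝ) : ℝ := (V.filter (· < v)).fold max 0 id

noncomputable def posValues (f : α → ℝ) : Finset ℝ := (univ.image f).filter (0 < ·)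

noncomputable def superlevel (f : α → ℝ) (v : ℝ) : Finset α := univ.filter (v ≤ f ·)

lemma prevValue_lt {V : Finset ℝ} (hV : ∀ v ∈ V, 0 < v) {v : ℝ} (hv : v ∈ V) :
    prevValue V v < v :=
  (fold_max_lt v).2 ⟨hV v hv, fun _ hx => (mem_filter.1 hx).2⟩

lemma sum_sub_prevValue {V : Finset ℝ} (hV : ∀ v ∈ V, 0 < v) :
    ∑ v ∈ V, (v - prevValue V v) = V.fold max 0 id := by
  induction V using Finset.induction_on_max with
  | empty => simp
  | insert a V ha ih =>
    have hnot : a ∉ V := fun h => lt_irrefl a (ha a h)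
    have hprev : ∀ v ∈ V, prevValue (insert a V) v = prevValue V v := fun v hv => by
      simp [prevValue, filter_insert, not_lt.2 (ha v hv).le]
    have htop : prevValue (insert a V) a = V.fold max 0 id := by
      rw [prevValue, filter_insert, if_neg (lt_irrefl a), filter_true_of_mem ha]
    have hle : V.fold max 0 id ≤ a :=
      (fold_max_le _).2 ⟨(hV a (mem_insert_self a V)).le, fun v hv => (ha v hv).le⟩
    rw [sum_insert hnot, sum_congr rfl fun v hv => by rw [hprev v hv],
      ih fun v hv => hV v (mem_insert_of_mem hv), htop, fold_insert hnot, id, max_eq_left hle,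
      sub_add_cancel]

lemma sum_filter_le_sub_prevValue {V : Finset ℝ} (hV : ∀ v ∈ V, 0 < v) {b : ℝ} (hb : b ∈ V) :
    ∑ v ∈ V with v ≤ b, (v - prevValue V v) = b := by
  have hprev : ∀ v ∈ V.filter (· ≤ b), prevValue V v = prevValue (V.filter (· ≤ b)) v := by
    intro v hv
    rw [prevValue, prevValue, filter_filter]
    congr 1
    ext x
    simp only [mem_filter]
    exact ⟨fun h => ⟨h.1, h.2.le.trans (mem_filter.1 hv).2, h.2⟩, fun h => ⟨h.1, h.2.2⟩⟩
  rw [sum_congr rfl fun v hv => by rw [hprev v hv],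
    sum_sub_prevValue fun v hv => hV v (mem_filter.1 hv).1]
  exact le_antisymm ((fold_max_le _).2 ⟨(hV b hb).le, fun v hv => (mem_filter.1 hv).2⟩)
    ((le_fold_max _).2 (Or.inr ⟨b, mem_filter.2 ⟨hb, le_rfl⟩, le_rfl⟩))

/-- Layer-cake formula: a nonnegative `f` is the sum of the indicators of its superlevel sets at
its positive values, weighted by the gaps between consecutive values. -/
theorem sum_posValues_ite_le {f : α → ℝ} (hf : ∀ a, 0 ≤ f a) (a : α) :
    ∑ v ∈ posValues f, (if v ≤ f a then v - prevValue (posValues f) v else 0) = f a := by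
  have hpos : ∀ v ∈ posValues f, 0 < v := fun v hv => (mem_filter.1 hv).2
  rw [← sum_filter]
  rcases (hf a).eq_or_lt with h | h
  · rw [← h, sum_eq_zero]
    intro v hv
    exact absurd (mem_filter.1 hv).2 (not_le.2 (hpos v (mem_filter.1 hv).1))
  · exact sum_filter_le_sub_prevValue hpos
      (mem_filter.2 ⟨mem_image_of_mem f (mem_univ a), h⟩)

lemma superlevel_anti (f : α → ℝ) : Antitone (superlevel f) := fun _ _ hvw _ ha => by
  simp only [superlevel, mem_filter, mem_univ, true_and] at ha ⊢
  exact hvw.trans ha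

lemma mem_superlevel {f : α → ℝ} {v : ℝ} {a : α} : a ∈ superlevel f v ↔ v ≤ f a := by
  simp [superlevel]

lemma exists_eq_of_mem_posValues {f : α → ℝ} {v : ℝ} (hv : v ∈ posValues f) :
    ∃ a, f a = v ∧ 0 < v := by
  obtain ⟨hv, hpos⟩ := mem_filter.1 hv
  obtain ⟨a, -, rfl⟩ := mem_image.1 hv
  exact ⟨a, rfl, hpos⟩

lemma superlevel_injOn (f : α → ℝ) : Set.InjOn (superlevel f) (posValues f) := by
  intro v hv w hw hvw
  obtain ⟨a, rfl, -⟩ := exists_eq_of_mem_posValues hv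
  obtain ⟨b, rfl, -⟩ := exists_eq_of_mem_posValues hw
  have hab := mem_superlevel.1 (hvw ▸ mem_superlevel.2 le_rfl : a ∈ superlevel f (f b))
  have hba := mem_superlevel.1 (hvw ▸ mem_superlevel.2 le_rfl : b ∈ superlevel f (f a))
  exact le_antisymm hba hab

end LayerCake

section Levels

variable {ι : Type*}

noncomputable def maxOrZero (p : ι → ℝ) (t : Finset ι) : ℝ := t.fold max 0 p

lemma le_maxOrZero (p : ι → ℝ) {t : Finset ι} {i : ι} (hi : i ∈ t) : p i ≤ maxOrZero p t :=
  (le_fold_max _).2 (Or.inr ⟨i, hi, le_rfl⟩)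

lemma maxOrZero_nonneg (p : ι → ℝ) (t : Finset ι) : 0 ≤ maxOrZero p t :=
  (le_fold_max _).2 (Or.inl le_rfl)

lemma maxOrZero_eq_sup' {p : ι → ℝ} (hp : ∀ i, 0 ≤ p i) {t : Finset ι} (ht : t.Nonempty) :
    maxOrZero p t = t.sup' ht p :=
  le_antisymm ((fold_max_le _).2 ⟨(hp _).trans (le_sup' p ht.choose_spec),
    fun _ hi => le_sup' p hi⟩) (sup'_le ht p fun _ hi => le_maxOrZero p hi)

lemma continuous_maxOrZero (t : Finset ι) : Continuous fun p : ι → ℝ => maxOrZero p t := by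
  induction t using Finset.induction_on with
  | empty => simpa [maxOrZero] using continuous_const
  | insert a t ha ih =>
    simp only [maxOrZero, fold_insert ha]
    exact (continuous_apply a).max ih

variable [Fintype ι]

/-- For `p ≥ 0` these are the coefficients in `p = ∑ s, faceCoeff p s • 𝟙 s`, supported on the
chain of superlevel sets of `p`. -/
noncomputable def faceCoeff (p : ι → ℝ) (s : Finset ι) : ℝ :=
  if h : s.Nonempty then max 0 (s.inf' h p - maxOrZero p sᶜ) else 0

noncomputable def faceSum (h : Finset ι → ℝ) (i : ι) : ℝ := ∑ s with i ∈ s, h s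

lemma faceSum_nonneg {h : Finset ι → ℝ} (hh : ∀ s, 0 ≤ h s) (i : ι) : 0 ≤ faceSum h i :=
  sum_nonneg fun s _ => hh s

lemma faceCoeff_nonneg (p : ι → ℝ) (s : Finset ι) : 0 ≤ faceCoeff p s := by
  unfold faceCoeff
  split_ifs
  exacts [le_max_left _ _, le_rfl]

@[simp]
lemma faceCoeff_empty (p : ι → ℝ) : faceCoeff p ∅ = 0 := by simp [faceCoeff]

lemma faceCoeff_eq_zero_of_le_maxOrZero {p : ι → ℝ} {s : Finset ι} {i : ι} (hi : i ∈ s)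
    (h : p i ≤ maxOrZero p sᶜ) : faceCoeff p s = 0 := by
  rw [faceCoeff, dif_pos ⟨i, hi⟩, max_eq_left]
  linarith [inf'_le p hi]

lemma faceCoeff_eq_zero_of_le {p : ι → ℝ} {s : Finset ι} {i i' : ι} (hi : i ∈ s) (hi' : i' ∉ s)
    (h : p i ≤ p i') : faceCoeff p s = 0 :=
  faceCoeff_eq_zero_of_le_maxOrZero hi (h.trans (le_maxOrZero p (mem_compl.2 hi')))

lemma isChain_support_faceCoeff (p : ι → ℝ) :
    IsChain (· ⊆ ·) (Function.support (faceCoeff p)) := by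
  intro s hs s' hs' _
  by_contra hcon
  obtain ⟨a, has, has'⟩ := not_subset.1 (not_or.1 hcon).1
  obtain ⟨c, hcs', hcs⟩ := not_subset.1 (not_or.1 hcon).2
  rcases le_total (p a) (p c) with h | h
  · exact hs (faceCoeff_eq_zero_of_le has hcs h)
  · exact hs' (faceCoeff_eq_zero_of_le hcs' has' h)

lemma continuous_faceCoeff (s : Finset ι) : Continuous fun p : ι → ℝ => faceCoeff p s := by
  unfold faceCoeff
  split_ifs with hs
  · exact continuous_const.max
      ((Continuous.finset_inf'_apply hs fun i _ => continuous_apply i).sub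
        (continuous_maxOrZero sᶜ))
  · exact continuous_const

section Chain

variable {C : Set (Finset ι)} (hC : IsChain (· ⊆ ·) C) {B : Finset ι}
include hC

lemma IsChain.exists_mem_iff_subset (hB : B.Nonempty) :
    ∃ i ∈ B, ∀ s ∈ C, i ∈ s ↔ B ⊆ s := by
  set D := univ.filter fun s => s ∈ C ∧ ¬ B ⊆ s
  rcases D.eq_empty_or_nonempty with hD | hD
  · obtain ⟨i, hi⟩ := hB
    refine ⟨i, hi, fun s hs => ⟨fun _ => ?_, fun h => h hi⟩⟩
    by_contra h
    exact (eq_empty_iff_forall_notMem.1 hD) s (mem_filter.2 ⟨mem_univ s, hs, h⟩)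
  · obtain ⟨s₀, hs₀, hmax⟩ := D.exists_max_image card hD
    obtain ⟨hs₀C, hBs₀⟩ := (mem_filter.1 hs₀).2
    obtain ⟨i, hiB, his₀⟩ := not_subset.1 hBs₀
    refine ⟨i, hiB, fun s hs => ⟨fun his => ?_, fun h => h hiB⟩⟩
    by_contra hBs
    have hle := hmax s (mem_filter.2 ⟨mem_univ s, hs, hBs⟩)
    rcases eq_or_ne s s₀ with rfl | hne
    · exact his₀ his
    rcases hC hs hs₀C hne with h | h
    · exact his₀ (h his)
    · exact hne (eq_of_subset_of_card_le h hle).symm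

lemma IsChain.exists_mem_iff_inter_nonempty (hB : B.Nonempty) :
    ∃ i ∈ B, ∀ s ∈ C, i ∈ s ↔ (s ∩ B).Nonempty := by
  set D := univ.filter fun s => s ∈ C ∧ (s ∩ B).Nonempty
  rcases D.eq_empty_or_nonempty with hD | hD
  · obtain ⟨i, hi⟩ := hB
    refine ⟨i, hi, fun s hs => ⟨fun his => ⟨i, mem_inter.2 ⟨his, hi⟩⟩, fun h => ?_⟩⟩
    exact absurd (mem_filter.2 ⟨mem_univ s, hs, h⟩) (eq_empty_iff_forall_notMem.1 hD s)
  · obtain ⟨s₀, hs₀, hmin⟩ := D.exists_min_image card hD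
    obtain ⟨hs₀C, i, hi⟩ := (mem_filter.1 hs₀).2
    refine ⟨i, (mem_inter.1 hi).2, fun s hs => ⟨fun his => ⟨i, mem_inter.2
      ⟨his, (mem_inter.1 hi).2⟩⟩, fun h => ?_⟩⟩
    have hle := hmin s (mem_filter.2 ⟨mem_univ s, hs, h⟩)
    rcases eq_or_ne s₀ s with rfl | hne
    · exact (mem_inter.1 hi).1
    rcases hC hs₀C hs hne with h | h
    · exact h (mem_inter.1 hi).1
    · exact absurd (eq_of_subset_of_card_le h hle) hne.symm

end Chain

lemma sum_filter_eq_of_support {h : Finset ι → ℝ} {P Q : Finset ι → Prop}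
    [DecidablePred P] [DecidablePred Q] (hPQ : ∀ s, h s ≠ 0 → (P s ↔ Q s)) :
    ∑ s with P s, h s = ∑ s with Q s, h s := by
  rw [sum_filter, sum_filter]
  refine sum_congr rfl fun s _ => ?_
  by_cases hs : h s = 0
  · simp [hs]
  · simp only [hPQ s hs]

section FaceSum

variable {h : Finset ι → ℝ} (hh : ∀ s, 0 ≤ h s) (hc : IsChain (· ⊆ ·) (Function.support h))
include hh hc

lemma inf'_faceSum {B : Finset ι} (hB : B.Nonempty) :
    B.inf' hB (faceSum h) = ∑ s with B ⊆ s, h s := by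
  obtain ⟨i₀, hi₀, H⟩ := hc.exists_mem_iff_subset hB
  refine le_antisymm ((inf'_le _ hi₀).trans_eq
    (sum_filter_eq_of_support fun s hs => H s hs : faceSum h i₀ = _))
    (le_inf' _ _ fun i hi => ?_)
  exact sum_le_sum_of_subset_of_nonneg (monotone_filter_right _ fun s _ hs => hs hi)
    fun s _ _ => hh s

lemma sup'_faceSum {B : Finset ι} (hB : B.Nonempty) :
    B.sup' hB (faceSum h) = ∑ s with (s ∩ B).Nonempty, h s := by
  obtain ⟨i₁, hi₁, H⟩ := hc.exists_mem_iff_inter_nonempty hB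
  refine le_antisymm (sup'_le _ _ fun i hi => ?_)
    ((sum_filter_eq_of_support fun s hs => (H s hs).symm : _ = faceSum h i₁).trans_le
      (le_sup' (faceSum h) hi₁))
  exact sum_le_sum_of_subset_of_nonneg
    (monotone_filter_right _ fun s _ hs => ⟨i, mem_inter.2 ⟨hs, hi⟩⟩) fun s _ _ => hh s

lemma maxOrZero_compl_faceSum (s : Finset ι) :
    maxOrZero (faceSum h) sᶜ = ∑ s' with ¬ s' ⊆ s, h s' := by
  rcases sᶜ.eq_empty_or_nonempty with hs | hs
  · rw [compl_eq_empty_iff] at hs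
    simp [hs, maxOrZero]
  · rw [maxOrZero_eq_sup' (faceSum_nonneg hh) hs, sup'_faceSum hh hc hs]
    congr 1
    ext s'
    simp [Finset.Nonempty, not_subset]

lemma faceCoeff_faceSum {s : Finset ι} (hs : s.Nonempty) : faceCoeff (faceSum h) s = h s := by
  have hsplit : ∑ s' with s ⊆ s', h s' = h s + ∑ s' with s ⊆ s' ∧ s' ≠ s, h s' := by
    rw [← sum_filter_add_sum_filter_not _ (· = s), filter_filter, filter_filter]
    congr 1
    rw [sum_filter, sum_eq_single s] <;> simp +contextual
  have hsub : ∑ s' with s ⊆ s' ∧ s' ≠ s, h s' ≤ ∑ s' with ¬ s' ⊆ s, h s' :=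
    sum_le_sum_of_subset_of_nonneg (monotone_filter_right _
      fun s' _ h' h'' => h'.2 (subset_antisymm h'' h'.1)) fun s' _ _ => hh s'
  rw [faceCoeff, dif_pos hs, inf'_faceSum hh hc hs, maxOrZero_compl_faceSum hh hc, hsplit]
  rcases eq_or_ne (h s) 0 with h0 | h0
  · rw [h0]
    exact max_eq_left (by linarith)
  · have heq : ∑ s' with s ⊆ s' ∧ s' ≠ s, h s' = ∑ s' with ¬ s' ⊆ s, h s' := by
      refine sum_filter_eq_of_support fun s' hs' => ⟨fun (h' : s ⊆ s' ∧ s' ≠ s) h'' => h'.2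
        (subset_antisymm h'' h'.1), fun h' => ⟨?_, fun he => h' (he ▸ subset_rfl)⟩⟩
      rcases eq_or_ne s s' with rfl | hne
      · exact subset_rfl
      · exact (hc h0 hs' hne).resolve_right h'
    rw [heq, add_sub_cancel_right]
    exact max_eq_right (hh s)

end FaceSum

lemma faceSum_congr {h h' : Finset ι → ℝ} (H : ∀ s : Finset ι, s.Nonempty → h s = h' s) :
    faceSum h = faceSum h' :=
  funext fun i => sum_congr rfl fun s hs => H s ⟨i, (mem_filter.1 hs).2⟩

lemma faceSum_faceCoeff {p : ι → ℝ} (hp : ∀ i, 0 ≤ p i) : faceSum (faceCoeff p) = p := by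
  set V := posValues p
  -- the layer-cake weights of `p`, placed on its superlevel sets
  set w : Finset ι → ℝ := fun s =>
    ∑ v ∈ V, if superlevel p v = s then v - prevValue V v else 0
  have hw : ∀ s, 0 ≤ w s := fun s => sum_nonneg fun v hv => by
    split_ifs
    exacts [sub_nonneg.2 (prevValue_lt (fun u hu => (mem_filter.1 hu).2) hv).le, le_rfl]
  have hc : IsChain (· ⊆ ·) (Function.support w) := by
    refine (superlevel_anti p).isChain_range.mono fun s hs => ?_
    obtain ⟨v, -, hv⟩ := exists_ne_zero_of_sum_ne_zero hs
    exact ⟨v, of_not_not fun h => hv (if_neg h)⟩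
  have hsum : faceSum w = p := funext fun i => by
    rw [faceSum, sum_comm, ← sum_posValues_ite_le hp i]
    refine sum_congr rfl fun v _ => ?_
    simp [V, sum_ite_eq, mem_superlevel]
  rw [← hsum]
  exact faceSum_congr fun s hs => faceCoeff_faceSum hw hc hs

end Levels

section Subdivision

variable {ι : Type*} [Fintype ι]

/-- `sdCoord p s` is the barycentric coordinate of `p` at the vertex `ŝ` (the barycenter of `s`)
of the barycentric subdivision, and `sdPoint t` is the point `∑ s, t s • ŝ`. -/
noncomputable def sdCoord (p : ι → ℝ) (s : Finset ι) : ℝ := s.card * faceCoeff p s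

noncomputable def sdPoint (t : Finset ι → ℝ) : ι → ℝ := faceSum fun s => t s / s.card

lemma sdCoord_nonneg (p : ι → ℝ) (s : Finset ι) : 0 ≤ sdCoord p s :=
  mul_nonneg (Nat.cast_nonneg _) (faceCoeff_nonneg p s)

@[simp]
lemma sdCoord_empty (p : ι → ℝ) : sdCoord p ∅ = 0 := by simp [sdCoord]

lemma support_sdCoord (p : ι → ℝ) :
    Function.support (sdCoord p) = Function.support (faceCoeff p) := by
  ext s
  rcases s.eq_empty_or_nonempty with rfl | hs
  · simp
  · simp [sdCoord, hs.ne_empty]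

lemma isChain_support_sdCoord (p : ι → ℝ) : IsChain (· ⊆ ·) (Function.support (sdCoord p)) :=
  support_sdCoord p ▸ isChain_support_faceCoeff p

lemma sdPoint_sdCoord {p : ι → ℝ} (hp : ∀ i, 0 ≤ p i) : sdPoint (sdCoord p) = p := by
  conv_rhs => rw [← faceSum_faceCoeff hp]
  exact faceSum_congr fun s hs => mul_div_cancel_left₀ _ (Nat.cast_ne_zero.2 hs.card_pos.ne')

lemma sdCoord_sdPoint {t : Finset ι → ℝ} (ht : ∀ s, 0 ≤ t s)
    (hc : IsChain (· ⊆ ·) (Function.support t)) (h0 : t ∅ = 0) : sdCoord (sdPoint t) = t := by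
  funext s
  rcases s.eq_empty_or_nonempty with rfl | hs
  · simp [h0]
  rw [sdCoord, sdPoint, faceCoeff_faceSum (fun s => div_nonneg (ht s) (Nat.cast_nonneg _))
    (hc.mono fun s hs => (div_ne_zero_iff.1 hs).1) hs,
    mul_div_cancel₀ _ (Nat.cast_ne_zero.2 hs.card_pos.ne')]

lemma sdPoint_nonneg {t : Finset ι → ℝ} (ht : ∀ s, 0 ≤ t s) (i : ι) : 0 ≤ sdPoint t i :=
  faceSum_nonneg (fun s => div_nonneg (ht s) (Nat.cast_nonneg _)) i

lemma sum_sdPoint {t : Finset ι → ℝ} (h0 : t ∅ = 0) : ∑ i, sdPoint t i = ∑ s, t s := by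
  simp only [sdPoint, faceSum, sum_filter]
  rw [sum_comm]
  refine sum_congr rfl fun s _ => ?_
  rw [sum_ite_mem, univ_inter, sum_const, nsmul_eq_mul]
  rcases s.eq_empty_or_nonempty with rfl | hs
  · simp [h0]
  · exact mul_div_cancel₀ _ (Nat.cast_ne_zero.2 hs.card_pos.ne')

lemma sum_smul_sdPoint {β : Type*} (Cc : Finset β) (W : β → ℝ) (t : β → Finset ι → ℝ) :
    ∑ c ∈ Cc, W c • sdPoint (t c) = sdPoint fun s => ∑ c ∈ Cc, W c * t c s := by
  funext i
  simp only [sdPoint, faceSum, Finset.sum_apply, Pi.smul_apply, smul_eq_mul, mul_sum, sum_div]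
  rw [sum_comm]
  simp only [mul_div_assoc]

lemma continuous_sdCoord (s : Finset ι) : Continuous fun p : ι → ℝ => sdCoord p s :=
  continuous_const.mul (continuous_faceCoeff s)

lemma Continuous.sdPoint {X : Type*} [TopologicalSpace X] {F : X → Finset ι → ℝ}
    (hF : ∀ s, Continuous fun x => F x s) : Continuous fun x => _root_.sdPoint (F x) :=
  continuous_pi fun _ => continuous_finsetSum _ fun s _ => (hF s).div_const _

end Subdivision

section Barycenters

variable {m : ℕ}

lemma faceBar_apply {s : Finset (Fin (m + 1))} (hs : s.Nonempty) (j : Fin (m + 1)) :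
    faceBar m s j = if j ∈ s then (s.card : ℝ)⁻¹ else 0 := by
  rw [faceBar, centroid_def, affineCombination_eq_linear_combination _ _ _
      (sum_centroidWeights_eq_one_of_nonempty ℝ s hs), Finset.sum_apply]
  simp [centroidWeights_apply]

noncomputable def chainCoord {ι : Type*} (c : Finset (Finset ι)) (s : Finset ι) : ℝ :=
  if s ∈ c then (c.card : ℝ)⁻¹ else 0

lemma chainCoord_nonneg {ι : Type*} (c : Finset (Finset ι)) (s : Finset ι) :
    0 ≤ chainCoord c s := by
  unfold chainCoord
  split_ifs
  exacts [inv_nonneg.2 (Nat.cast_nonneg _), le_rfl]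

lemma sum_chainCoord {ι : Type*} [Fintype ι] {c : Finset (Finset ι)} (hc : c.Nonempty) :
    ∑ s, chainCoord c s = 1 := by
  simp [chainCoord, hc.card_pos.ne']

lemma support_chainCoord {ι : Type*} {c : Finset (Finset ι)} (hc : c.Nonempty) :
    Function.support (chainCoord c) = c := by
  ext s
  simp [chainCoord, hc.ne_empty]

lemma empty_notMem_of_isSdSimplex {c : Finset (Finset (Fin (m + 1)))} (hc : isSdSimplex m c) :
    ∅ ∉ c :=
  fun h => not_nonempty_empty (hc.2.1 ∅ h)

lemma chainCoord_empty {c : Finset (Finset (Fin (m + 1)))} (hc : isSdSimplex m c) :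
    chainCoord c ∅ = 0 :=
  if_neg (empty_notMem_of_isSdSimplex hc)

lemma chainBar_eq_sdPoint {c : Finset (Finset (Fin (m + 1)))} (hc : isSdSimplex m c) :
    chainBar m c = sdPoint (chainCoord c) := by
  funext i
  rw [chainBar, centroid_def, affineCombination_eq_linear_combination _ _ _
      (sum_centroidWeights_eq_one_of_nonempty ℝ c hc.1), Finset.sum_apply, sdPoint, faceSum,
    sum_filter, ← sum_subset (subset_univ c) fun s _ hs => by simp [chainCoord, hs]]
  refine sum_congr rfl fun s hs => ?_
  simp [centroidWeights_apply, faceBar_apply (hc.2.1 s hs), chainCoord, hs, div_eq_mul_inv]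

lemma sdCoord_chainBar {c : Finset (Finset (Fin (m + 1)))} (hc : isSdSimplex m c) :
    sdCoord (chainBar m c) = chainCoord c := by
  rw [chainBar_eq_sdPoint hc]
  exact sdCoord_sdPoint (chainCoord_nonneg c) (support_chainCoord hc.1 ▸ hc.2.2)
    (chainCoord_empty hc)

lemma chainBar_injOn : Set.InjOn (chainBar m) {c | isSdSimplex m c} := by
  intro c hc c' hc' h
  have := congrArg Function.support (congrArg sdCoord h)
  rwa [sdCoord_chainBar hc, sdCoord_chainBar hc', support_chainCoord hc.1,
    support_chainCoord hc'.1, coe_inj] at this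

variable {β : Type*} {Cc : Finset β} {c : β → Finset (Finset (Fin (m + 1)))}

lemma sum_smul_chainBar (hCc : ∀ a ∈ Cc, isSdSimplex m (c a)) (W : β → ℝ) :
    ∑ a ∈ Cc, W a • chainBar m (c a) = sdPoint fun s => ∑ a ∈ Cc, W a * chainCoord (c a) s := by
  rw [← sum_smul_sdPoint]
  exact sum_congr rfl fun a ha => by rw [chainBar_eq_sdPoint (hCc a ha)]

lemma sum_apply_sum_smul_chainBar (hCc : ∀ a ∈ Cc, isSdSimplex m (c a)) (W : β → ℝ) :
    ∑ i, (∑ a ∈ Cc, W a • chainBar m (c a)) i = ∑ a ∈ Cc, W a := by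
  rw [sum_smul_chainBar hCc, sum_sdPoint (sum_eq_zero fun a ha => by
    rw [chainCoord_empty (hCc a ha), mul_zero]), sum_comm]
  refine sum_congr rfl fun a ha => ?_
  rw [← mul_sum, sum_chainCoord (hCc a ha).1, mul_one]

lemma sdCoord_sum_smul_chainBar (hCc : ∀ a ∈ Cc, isSdSimplex m (c a))
    (hchain : ∀ a ∈ Cc, ∀ a' ∈ Cc, c a ⊆ c a' ∨ c a' ⊆ c a) {W : β → ℝ}
    (hW : ∀ a ∈ Cc, 0 ≤ W a) :
    sdCoord (∑ a ∈ Cc, W a • chainBar m (c a)) = fun s => ∑ a ∈ Cc, W a * chainCoord (c a) s := by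
  rw [sum_smul_chainBar hCc]
  refine sdCoord_sdPoint (fun s => sum_nonneg fun a ha => mul_nonneg (hW a ha)
    (chainCoord_nonneg _ s)) ?_ (sum_eq_zero fun a ha => by
      rw [chainCoord_empty (hCc a ha), mul_zero])
  have hmem : ∀ s, (∑ a ∈ Cc, W a * chainCoord (c a) s) ≠ 0 → ∃ a ∈ Cc, s ∈ c a := by
    intro s hs
    obtain ⟨a, ha, hne⟩ := exists_ne_zero_of_sum_ne_zero hs
    exact ⟨a, ha, of_not_not fun h => hne (by rw [chainCoord, if_neg h, mul_zero])⟩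
  intro s hs s' hs' hss'
  obtain ⟨a, ha, hsa⟩ := hmem s hs
  obtain ⟨a', ha', hsa'⟩ := hmem s' hs'
  rcases hchain a ha a' ha' with h | h
  · exact (hCc a' ha').2.2 (h hsa) hsa' hss'
  · exact (hCc a ha).2.2 hsa (h hsa') hss'

end Barycenters

section DualCell

def dualCellCoords {ι : Type*} [Fintype ι] (ρ : Finset (Finset ι)) : Set (ι → ℝ) :=
  {p | (∀ i, 0 ≤ p i) ∧ ∑ i, p i = 1 ∧
    ∃ α, ∀ s, (s ∈ ρ → sdCoord p s = α) ∧ (s ∉ ρ → sdCoord p s < α)}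

variable {m : ℕ}

lemma mem_openHullOf_image {β : Type*} [Nonempty β] {Cc : Finset β} {f : β → Fin (m + 1) → ℝ}
    (hf : Set.InjOn f Cc) {x : Fin (m + 1) → ℝ} :
    x ∈ openHullOf m (Cc.image f) ↔
      ∃ W : β → ℝ, (∀ a ∈ Cc, 0 < W a) ∧ ∑ a ∈ Cc, W a = 1 ∧ ∑ a ∈ Cc, W a • f a = x := by
  constructor
  · rintro ⟨w, hpos, hsum, rfl⟩
    exact ⟨w ∘ f, fun a ha => hpos _ (mem_image_of_mem f ha), by rwa [sum_image hf] at hsum,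
      (sum_image (f := fun y => w y • y) hf).symm⟩
  · rintro ⟨W, hpos, hsum, rfl⟩
    have hinv : ∀ a ∈ Cc, W (Function.invFunOn f Cc (f a)) = W a := fun a ha => by
      rw [hf.leftInvOn_invFunOn ha]
    refine ⟨fun y => W (Function.invFunOn f Cc y), ?_, ?_, ?_⟩
    · simp only [forall_mem_image]
      exact fun a ha => (hinv a ha).symm ▸ hpos a ha
    · rw [sum_image hf, ← hsum]
      exact sum_congr rfl hinv
    · rw [sum_image hf]
      exact sum_congr rfl fun a ha => by simp only [hinv a ha]

lemma openDualCell_subset_dualCellCoords (ρ : Finset (Finset (Fin (m + 1)))) :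
    openDualCell m ρ ⊆ dualCellCoords ρ := by
  intro p hp
  simp only [openDualCell, Set.mem_iUnion] at hp
  obtain ⟨Cc, ⟨-, hCc, hchain, hρCc, hρsub⟩, hp⟩ := hp
  obtain ⟨W, hWpos, hWsum, rfl⟩ :=
    (mem_openHullOf_image (chainBar_injOn.mono fun c hc => hCc c hc)).1 hp
  have hcomp : ∀ c ∈ Cc, ∀ c' ∈ Cc, c ⊆ c' ∨ c' ⊆ c := fun c hc c' hc' =>
    (eq_or_ne c c').elim (fun h => Or.inl h.le) (hchain hc hc')
  have hcoord := sdCoord_sum_smul_chainBar (c := fun c => c) hCc hcomp fun c hc => (hWpos c hc).le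
  refine ⟨?_, by rw [sum_apply_sum_smul_chainBar (c := fun c => c) hCc, hWsum],
    ∑ c ∈ Cc, W c * (c.card : ℝ)⁻¹, fun s => ⟨fun hs => ?_, fun hs => ?_⟩⟩
  · rw [sum_smul_chainBar (c := fun c => c) hCc]
    exact sdPoint_nonneg fun s => sum_nonneg fun c hc =>
      mul_nonneg (hWpos c hc).le (chainCoord_nonneg _ s)
  · rw [hcoord]
    exact sum_congr rfl fun c hc => by rw [chainCoord, if_pos (hρsub c hc hs)]
  · rw [hcoord]
    refine sum_lt_sum (fun c hc => mul_le_mul_of_nonneg_left ?_ (hWpos c hc).le) ⟨ρ, hρCc, ?_⟩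
    · unfold chainCoord
      split_ifs
      exacts [le_rfl, inv_nonneg.2 (Nat.cast_nonneg _)]
    · rw [chainCoord, if_neg hs, mul_zero]
      exact mul_pos (hWpos ρ hρCc) (inv_pos.2 (Nat.cast_pos.2 (hCc ρ hρCc).1.card_pos))

lemma isSdSimplex_superlevel_sdCoord (p : Fin (m + 1) → ℝ) {v : ℝ}
    (hv : v ∈ posValues (sdCoord p)) : isSdSimplex m (superlevel (sdCoord p) v) := by
  obtain ⟨s, rfl, hpos⟩ := exists_eq_of_mem_posValues hv
  have hsupp : ∀ s' ∈ superlevel (sdCoord p) (sdCoord p s), 0 < sdCoord p s' :=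
    fun s' hs' => hpos.trans_le (mem_superlevel.1 hs')
  refine ⟨⟨s, mem_superlevel.2 le_rfl⟩, fun s' hs' => ?_,
    (isChain_support_sdCoord p).mono fun s' hs' => (hsupp s' hs').ne'⟩
  exact nonempty_iff_ne_empty.2 fun h => (hsupp s' hs').ne' (h ▸ sdCoord_empty p)

noncomputable def layerWeight {α : Type*} [Fintype α] (f : α → ℝ) (v : ℝ) : ℝ :=
  (superlevel f v).card * (v - prevValue (posValues f) v)

/-- The layer-cake formula for `sdCoord p`, read through `sdPoint`. -/
lemma sum_smul_chainBar_superlevel {p : Fin (m + 1) → ℝ} (hp : ∀ i, 0 ≤ p i) :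
    ∑ v ∈ posValues (sdCoord p), layerWeight (sdCoord p) v • chainBar m (superlevel (sdCoord p) v)
      = p := by
  rw [sum_smul_chainBar fun v hv => isSdSimplex_superlevel_sdCoord p hv]
  conv_rhs => rw [← sdPoint_sdCoord hp]
  congr 1
  funext s
  rw [← sum_posValues_ite_le (sdCoord_nonneg p) s]
  refine sum_congr rfl fun v hv => ?_
  have hcard : ((superlevel (sdCoord p) v).card : ℝ) ≠ 0 :=
    Nat.cast_ne_zero.2 (isSdSimplex_superlevel_sdCoord p hv).1.card_pos.ne'
  simp only [layerWeight, chainCoord, mem_superlevel]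
  split_ifs
  · field_simp
  · rw [mul_zero]

lemma dualCellCoords_subset_openDualCell {ρ : Finset (Finset (Fin (m + 1)))}
    (hρ : isSdSimplex m ρ) : dualCellCoords ρ ⊆ openDualCell m ρ := by
  rintro p ⟨hp0, hp1, α, hα⟩
  have hle : ∀ s, sdCoord p s ≤ α := fun s =>
    (em (s ∈ ρ)).elim (fun hs => ((hα s).1 hs).le) fun hs => ((hα s).2 hs).le
  have hαV : α ∈ posValues (sdCoord p) := by
    obtain ⟨s₀, hs₀⟩ := hρ.1
    have hpos : 0 < α := by simpa using (hα ∅).2 (empty_notMem_of_isSdSimplex hρ)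
    exact mem_filter.2 ⟨(hα s₀).1 hs₀ ▸ mem_image_of_mem _ (mem_univ s₀), hpos⟩
  have hLα : superlevel (sdCoord p) α = ρ := by
    ext s
    rw [mem_superlevel]
    exact ⟨fun h => of_not_not fun hs => (h.trans_lt ((hα s).2 hs)).false,
      fun hs => ((hα s).1 hs).ge⟩
  have hsd := fun v (hv : v ∈ posValues (sdCoord p)) => isSdSimplex_superlevel_sdCoord p hv
  simp only [openDualCell, Set.mem_iUnion]
  refine ⟨(posValues (sdCoord p)).image (superlevel (sdCoord p)), ⟨⟨_, mem_image_of_mem _ hαV⟩,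
    forall_mem_image.2 hsd, (superlevel_anti (sdCoord p)).isChain_range.mono (by simp),
    hLα ▸ mem_image_of_mem _ hαV, forall_mem_image.2 fun v hv s hs => ?_⟩, ?_⟩
  · obtain ⟨s', rfl, -⟩ := exists_eq_of_mem_posValues hv
    exact mem_superlevel.2 (((hα s).1 hs).symm ▸ hle s')
  rw [image_image, mem_openHullOf_image
    (chainBar_injOn.comp (superlevel_injOn (sdCoord p)) fun v hv => hsd v hv)]
  refine ⟨layerWeight (sdCoord p), fun v hv => mul_pos (Nat.cast_pos.2 (hsd v hv).1.card_pos)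
    (sub_pos.2 (prevValue_lt (fun w hw => (mem_filter.1 hw).2) hv)), ?_,
    sum_smul_chainBar_superlevel hp0⟩
  rw [← sum_apply_sum_smul_chainBar hsd, sum_smul_chainBar_superlevel hp0, hp1]

theorem openDualCell_eq_dualCellCoords {ρ : Finset (Finset (Fin (m + 1)))}
    (hρ : isSdSimplex m ρ) : openDualCell m ρ = dualCellCoords ρ :=
  (openDualCell_subset_dualCellCoords ρ).antisymm (dualCellCoords_subset_openDualCell hρ)

end DualCell

section LinkCone

variable {ι : Type*} [Fintype ι] {ρ : Finset (Finset ι)} {s₀ : Finset ι}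

def linkCone (ρ : Finset (Finset ι)) : Set (ι → ℝ) :=
  {x | (∀ i, 0 ≤ x i) ∧ ∀ s ∈ ρ, sdCoord x s = 0 ∧ ∀ s', sdCoord x s' ≠ 0 → s ⊆ s' ∨ s' ⊆ s}

/-- On the dual cell `sdCoord p s < sdCoord p s₀` off `ρ`; stretching `[0, sdCoord p s₀)` onto
`[0, ∞)` in each such coordinate opens the cell up into the cone over the link of `ρ`. -/
noncomputable def toLinkCoord (ρ : Finset (Finset ι)) (s₀ : Finset ι) (p : ι → ℝ)
    (s : Finset ι) : ℝ :=
  if s ∈ ρ then 0 else sdCoord p s / (sdCoord p s₀ - sdCoord p s)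

noncomputable def linkWeight (ρ : Finset (Finset ι)) (x : ι → ℝ) (s : Finset ι) : ℝ :=
  if s ∈ ρ then 1 else sdCoord x s / (1 + sdCoord x s)

noncomputable def ofLinkCoord (ρ : Finset (Finset ι)) (x : ι → ℝ) (s : Finset ι) : ℝ :=
  linkWeight ρ x s / ∑ s', linkWeight ρ x s'

lemma sdCoord_of_mem_dualCellCoords {p : ι → ℝ} (hp : p ∈ dualCellCoords ρ) (hs₀ : s₀ ∈ ρ)
    (s : Finset ι) :
    (s ∈ ρ → sdCoord p s = sdCoord p s₀) ∧ (s ∉ ρ → sdCoord p s < sdCoord p s₀) := by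
  obtain ⟨α, hα⟩ := hp.2.2
  rw [(hα s₀).1 hs₀]
  exact hα s

lemma linkWeight_nonneg (x : ι → ℝ) (s : Finset ι) : 0 ≤ linkWeight ρ x s := by
  unfold linkWeight
  split_ifs
  exacts [zero_le_one, div_nonneg (sdCoord_nonneg x s) (by linarith [sdCoord_nonneg x s])]

lemma linkWeight_lt_one (x : ι → ℝ) {s : Finset ι} (hs : s ∉ ρ) : linkWeight ρ x s < 1 := by
  rw [linkWeight, if_neg hs, div_lt_one (by linarith [sdCoord_nonneg x s])]
  linarith

lemma one_le_sum_linkWeight (x : ι → ℝ) (hs₀ : s₀ ∈ ρ) : 1 ≤ ∑ s, linkWeight ρ x s := by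
  calc (1 : ℝ) = linkWeight ρ x s₀ := (if_pos hs₀).symm
    _ ≤ ∑ s, linkWeight ρ x s :=
      single_le_sum (fun s _ => linkWeight_nonneg x s) (mem_univ s₀)

lemma toLinkCoord_nonneg {p : ι → ℝ} (hp : p ∈ dualCellCoords ρ) (hs₀ : s₀ ∈ ρ) (s : Finset ι) :
    0 ≤ toLinkCoord ρ s₀ p s := by
  unfold toLinkCoord
  split_ifs with hs
  · exact le_rfl
  · exact div_nonneg (sdCoord_nonneg p s)
      (sub_nonneg.2 ((sdCoord_of_mem_dualCellCoords hp hs₀ s).2 hs).le)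

lemma sdCoord_sdPoint_toLinkCoord {p : ι → ℝ} (hp : p ∈ dualCellCoords ρ) (hs₀ : s₀ ∈ ρ) :
    sdCoord (sdPoint (toLinkCoord ρ s₀ p)) = toLinkCoord ρ s₀ p := by
  refine sdCoord_sdPoint (toLinkCoord_nonneg hp hs₀) ((isChain_support_sdCoord p).mono
    fun s hs => ?_) (by simp [toLinkCoord])
  by_cases h : s ∈ ρ
  · simp [toLinkCoord, h] at hs
  · simp only [Function.mem_support, toLinkCoord, if_neg h] at hs
    exact (div_ne_zero_iff.1 hs).1

lemma sdCoord_sdPoint_ofLinkCoord {x : ι → ℝ} (hx : x ∈ linkCone ρ) (hs₀ : s₀ ∈ ρ)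
    (hρ : ∅ ∉ ρ) (hchain : IsChain (· ⊆ ·) (ρ : Set (Finset ι))) :
    sdCoord (sdPoint (ofLinkCoord ρ x)) = ofLinkCoord ρ x := by
  have hsum := (zero_lt_one.trans_le (one_le_sum_linkWeight x hs₀))
  refine sdCoord_sdPoint (fun s => div_nonneg (linkWeight_nonneg x s) hsum.le) ?_ ?_
  · have hsupp : ∀ s, ofLinkCoord ρ x s ≠ 0 → s ∈ ρ ∨ sdCoord x s ≠ 0 := fun s hs => by
      by_contra h
      simp [ofLinkCoord, linkWeight, not_or.1 h] at hs
    intro s hs s' hs' hne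
    rcases hsupp s hs with h | h <;> rcases hsupp s' hs' with h' | h'
    · exact hchain h h' hne
    · exact (hx.2 s h).2 s' h'
    · exact ((hx.2 s' h').2 s h).symm
    · exact isChain_support_sdCoord x h h' hne
  · simp [ofLinkCoord, linkWeight, hρ]

lemma sdCoord_pos_of_mem_dualCellCoords {p : ι → ℝ} (hp : p ∈ dualCellCoords ρ) (hs₀ : s₀ ∈ ρ)
    (hρ : ∅ ∉ ρ) : 0 < sdCoord p s₀ := by
  simpa using (sdCoord_of_mem_dualCellCoords hp hs₀ ∅).2 hρ

lemma sdPoint_toLinkCoord_mem {p : ι → ℝ} (hp : p ∈ dualCellCoords ρ) (hs₀ : s₀ ∈ ρ)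
    (hρ : ∅ ∉ ρ) : sdPoint (toLinkCoord ρ s₀ p) ∈ linkCone ρ := by
  refine ⟨sdPoint_nonneg (toLinkCoord_nonneg hp hs₀), fun s hs => ?_⟩
  rw [sdCoord_sdPoint_toLinkCoord hp hs₀]
  refine ⟨if_pos hs, fun s' hs' => ?_⟩
  have hs'ρ : s' ∉ ρ := fun h => hs' (if_pos h)
  have hps : sdCoord p s ≠ 0 := ((sdCoord_of_mem_dualCellCoords hp hs₀ s).1 hs).symm ▸
    (sdCoord_pos_of_mem_dualCellCoords hp hs₀ hρ).ne'
  have hps' : sdCoord p s' ≠ 0 := fun h => hs' (by simp [toLinkCoord, h])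
  exact isChain_support_sdCoord p hps hps' fun h => hs'ρ (h ▸ hs)

lemma sdPoint_ofLinkCoord_mem {x : ι → ℝ} (hx : x ∈ linkCone ρ) (hs₀ : s₀ ∈ ρ) (hρ : ∅ ∉ ρ)
    (hchain : IsChain (· ⊆ ·) (ρ : Set (Finset ι))) :
    sdPoint (ofLinkCoord ρ x) ∈ dualCellCoords ρ := by
  have hsum := zero_lt_one.trans_le (one_le_sum_linkWeight x hs₀)
  refine ⟨sdPoint_nonneg fun s => div_nonneg (linkWeight_nonneg x s) hsum.le, ?_,
    (∑ s, linkWeight ρ x s)⁻¹, fun s => ⟨fun hs => ?_, fun hs => ?_⟩⟩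
  · rw [sum_sdPoint (by simp [ofLinkCoord, linkWeight, hρ])]
    simp only [ofLinkCoord]
    rw [← sum_div, div_self hsum.ne']
  · rw [sdCoord_sdPoint_ofLinkCoord hx hs₀ hρ hchain, ofLinkCoord, linkWeight, if_pos hs, one_div]
  · rw [sdCoord_sdPoint_ofLinkCoord hx hs₀ hρ hchain, ofLinkCoord, ← one_div]
    exact div_lt_div_of_pos_right (linkWeight_lt_one x hs) hsum

lemma ofLinkCoord_sdPoint_toLinkCoord {p : ι → ℝ} (hp : p ∈ dualCellCoords ρ) (hs₀ : s₀ ∈ ρ)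
    (hρ : ∅ ∉ ρ) : ofLinkCoord ρ (sdPoint (toLinkCoord ρ s₀ p)) = sdCoord p := by
  have hα := (sdCoord_pos_of_mem_dualCellCoords hp hs₀ hρ).ne'
  have hw : ∀ s, linkWeight ρ (sdPoint (toLinkCoord ρ s₀ p)) s = sdCoord p s / sdCoord p s₀ := by
    intro s
    rw [linkWeight, sdCoord_sdPoint_toLinkCoord hp hs₀, toLinkCoord]
    by_cases hs : s ∈ ρ
    · rw [if_pos hs, (sdCoord_of_mem_dualCellCoords hp hs₀ s).1 hs, div_self hα]
    · have hlt := sub_pos.2 ((sdCoord_of_mem_dualCellCoords hp hs₀ s).2 hs)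
      rw [if_neg hs, if_neg hs, one_add_div hlt.ne', sub_add_cancel,
        div_div_div_cancel_right₀ hlt.ne']
  have htot : ∑ s, sdCoord p s = 1 := by
    rw [← sum_sdPoint (sdCoord_empty p), sdPoint_sdCoord hp.1, hp.2.1]
  funext s
  rw [ofLinkCoord, hw, sum_congr rfl fun s _ => hw s, ← sum_div, htot]
  field_simp

lemma toLinkCoord_sdPoint_ofLinkCoord {x : ι → ℝ} (hx : x ∈ linkCone ρ) (hs₀ : s₀ ∈ ρ)
    (hρ : ∅ ∉ ρ) (hchain : IsChain (· ⊆ ·) (ρ : Set (Finset ι))) :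
    toLinkCoord ρ s₀ (sdPoint (ofLinkCoord ρ x)) = sdCoord x := by
  have hsum := zero_lt_one.trans_le (one_le_sum_linkWeight x hs₀)
  funext s
  rw [toLinkCoord, sdCoord_sdPoint_ofLinkCoord hx hs₀ hρ hchain]
  by_cases hs : s ∈ ρ
  · rw [if_pos hs, (hx.2 s hs).1]
  · have he := sdCoord_nonneg x s
    rw [if_neg hs, ofLinkCoord, ofLinkCoord, linkWeight, linkWeight, if_pos hs₀, if_neg hs]
    field_simp
    ring

lemma continuous_toLinkCoord (hs₀ : s₀ ∈ ρ) (s : Finset ι) :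
    Continuous fun p : dualCellCoords ρ => toLinkCoord ρ s₀ p s := by
  unfold toLinkCoord
  split_ifs with hs
  · exact continuous_const
  · have hc : ∀ s, Continuous fun p : dualCellCoords ρ => sdCoord (p : ι → ℝ) s :=
      fun s => (continuous_sdCoord s).comp continuous_subtype_val
    exact (hc s).div ((hc s₀).sub (hc s)) fun p =>
      (sub_pos.2 ((sdCoord_of_mem_dualCellCoords p.2 hs₀ s).2 hs)).ne'

lemma continuous_ofLinkCoord (hs₀ : s₀ ∈ ρ) (s : Finset ι) :
    Continuous fun x : ι → ℝ => ofLinkCoord ρ x s := by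
  have hw : ∀ s, Continuous fun x : ι → ℝ => linkWeight ρ x s := fun s => by
    unfold linkWeight
    split_ifs
    · exact continuous_const
    · exact (continuous_sdCoord s).div (continuous_const.add (continuous_sdCoord s)) fun x =>
        by linarith [sdCoord_nonneg x s]
  exact (hw s).div (continuous_finsetSum _ fun s _ => hw s) fun x =>
    (zero_lt_one.trans_le (one_le_sum_linkWeight x hs₀)).ne'

noncomputable def dualCellHomeomorphLinkCone (hs₀ : s₀ ∈ ρ) (hρ : ∅ ∉ ρ)
    (hchain : IsChain (· ⊆ ·) (ρ : Set (Finset ι))) : dualCellCoords ρ ≃ₜ linkCone ρ where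
  toFun p := ⟨sdPoint (toLinkCoord ρ s₀ p), sdPoint_toLinkCoord_mem p.2 hs₀ hρ⟩
  invFun x := ⟨sdPoint (ofLinkCoord ρ x), sdPoint_ofLinkCoord_mem x.2 hs₀ hρ hchain⟩
  left_inv p := Subtype.ext <| by
    simp only [ofLinkCoord_sdPoint_toLinkCoord p.2 hs₀ hρ, sdPoint_sdCoord p.2.1]
  right_inv x := Subtype.ext <| by
    simp only [toLinkCoord_sdPoint_ofLinkCoord x.2 hs₀ hρ hchain, sdPoint_sdCoord x.2.1]
  continuous_toFun := (Continuous.sdPoint (continuous_toLinkCoord hs₀)).subtype_mk _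
  continuous_invFun := ((Continuous.sdPoint (continuous_ofLinkCoord hs₀)).comp
    continuous_subtype_val).subtype_mk _

end LinkCone

section Blocks

variable {ι : Type*} [Fintype ι] (b : ι → ℕ)

def flag (j : ℕ) : Finset ι := univ.filter (b · ≤ j)

def block (j : ℕ) : Finset ι := univ.filter (b · = j)

noncomputable def blockMin (y : ι → ℝ) (j : ℕ) : ℝ :=
  if h : (block b j).Nonempty then (block b j).inf' h y else 0

noncomputable def blockMax (y : ι → ℝ) (j : ℕ) : ℝ :=
  if h : (block b j).Nonempty then (block b j).sup' h y else 0

/-- The ranges of `x` on the blocks `0, 1, …, k` are stacked from the top down, each one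
starting where the next one ends, and the last one ending at `0`. -/
def stackedCone (k : ℕ) : Set (ι → ℝ) :=
  {x | (∀ i, 0 ≤ x i) ∧ ∀ j ≤ k, blockMin b x j = blockMax b x (j + 1)}

variable {b}

@[simp]
lemma mem_flag {i : ι} {j : ℕ} : i ∈ flag b j ↔ b i ≤ j := by simp [flag]

@[simp]
lemma mem_block {i : ι} {j : ℕ} : i ∈ block b j ↔ b i = j := by simp [block]

lemma block_subset_flag (j : ℕ) : block b j ⊆ flag b j := fun _ hi =>
  mem_flag.2 (mem_block.1 hi).le

lemma blockMin_le (y : ι → ℝ) (i : ι) : blockMin b y (b i) ≤ y i := by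
  rw [blockMin, dif_pos ⟨i, mem_block.2 rfl⟩]
  exact inf'_le y (mem_block.2 rfl)

lemma le_blockMax (y : ι → ℝ) (i : ι) : y i ≤ blockMax b y (b i) := by
  rw [blockMax, dif_pos ⟨i, mem_block.2 rfl⟩]
  exact le_sup' y (mem_block.2 rfl)

lemma blockMin_le_blockMax (y : ι → ℝ) (j : ℕ) : blockMin b y j ≤ blockMax b y j := by
  rw [blockMin, blockMax]
  split_ifs with h
  · exact (inf'_le y h.choose_spec).trans (le_sup' y h.choose_spec)
  · exact le_rfl

lemma exists_blockMin_eq (y : ι → ℝ) {j : ℕ} (h : (block b j).Nonempty) :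
    ∃ i, b i = j ∧ y i = blockMin b y j := by
  obtain ⟨i, hi, he⟩ := exists_mem_eq_inf' h y
  exact ⟨i, mem_block.1 hi, by rw [blockMin, dif_pos h, he]⟩

lemma blockMax_succ_le_maxOrZero (y : ι → ℝ) (j : ℕ) :
    blockMax b y (j + 1) ≤ maxOrZero y (flag b j)ᶜ := by
  rw [blockMax]
  split_ifs with h
  · exact sup'_le h y fun i hi => le_maxOrZero y (by simp [mem_block.1 hi])
  · exact maxOrZero_nonneg y _

variable {k : ℕ} {x : ι → ℝ}

lemma blockMax_le_blockMin (hx : x ∈ stackedCone b k) {j j' : ℕ} (hjj' : j < j') (hj' : j' ≤ k) :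
    blockMax b x j' ≤ blockMin b x j := by
  induction j', hjj' using Nat.le_induction with
  | base => exact (hx.2 j (by omega)).ge
  | succ j' hj ih =>
    calc blockMax b x (j' + 1) = blockMin b x j' := (hx.2 j' (by omega)).symm
      _ ≤ blockMax b x j' := blockMin_le_blockMax x j'
      _ ≤ blockMin b x j := ih (by omega)

lemma le_of_mem_stackedCone (hx : x ∈ stackedCone b k) (hb : ∀ i, b i ≤ k) {i i' : ι}
    (h : b i < b i') : x i' ≤ x i :=
  (le_blockMax x i').trans ((blockMax_le_blockMin hx h (hb i')).trans (blockMin_le x i))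

variable {ρ : Finset (Finset ι)}

lemma stackedCone_subset_linkCone (hρ : ∀ s, s ∈ ρ ↔ ∃ j ≤ k, flag b j = s)
    (hb : ∀ i, b i ≤ k) (hblock : ∀ j ≤ k, (block b j).Nonempty) :
    stackedCone b k ⊆ linkCone ρ := by
  intro x hx
  refine ⟨hx.1, fun s hs => ?_⟩
  obtain ⟨j, hj, rfl⟩ := (hρ s).1 hs
  obtain ⟨i, hij, hi⟩ := exists_blockMin_eq x (hblock j hj)
  have hzero : faceCoeff x (flag b j) = 0 := faceCoeff_eq_zero_of_le_maxOrZero (mem_flag.2 hij.le)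
    (hi ▸ hx.2 j hj ▸ blockMax_succ_le_maxOrZero x j)
  refine ⟨by rw [sdCoord, hzero, mul_zero], fun s' hs' => ?_⟩
  rw [← Function.mem_support, support_sdCoord] at hs'
  by_contra hcon
  obtain ⟨c, hc, hcs'⟩ := not_subset.1 (not_or.1 hcon).1
  obtain ⟨a, has', ha⟩ := not_subset.1 (not_or.1 hcon).2
  exact hs' (faceCoeff_eq_zero_of_le has' hcs'
    (le_of_mem_stackedCone hx hb ((mem_flag.1 hc).trans_lt (not_le.1 (mem_flag.not.1 ha)))))

lemma block_subset_iff_not_subset_flag {s : Finset ι} {j : ℕ}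
    (hcomp : ∀ j' ≤ j, s ⊆ flag b j' ∨ flag b j' ⊆ s) (hne : s ≠ flag b j)
    (hblock : (block b j).Nonempty) : block b j ⊆ s ↔ ¬ s ⊆ flag b j := by
  refine ⟨fun hbs hsf => ?_, fun h => (block_subset_flag j).trans
    ((hcomp j le_rfl).resolve_left h)⟩
  obtain ⟨i, hif, his⟩ := not_subset.1 fun h => hne (subset_antisymm hsf h)
  have hlt : b i < j := (mem_flag.1 hif).lt_of_ne fun h => his (hbs (mem_block.2 h))
  obtain ⟨i', hi'⟩ := hblock
  rcases hcomp (b i) hlt.le with h | h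
  · exact absurd (mem_flag.1 (h (hbs hi'))) (by rw [mem_block.1 hi']; exact not_le.2 hlt)
  · exact his (h (mem_flag.2 le_rfl))

lemma not_subset_flag_iff {s : Finset ι} {j : ℕ} (hcomp : s ⊆ flag b (j + 1) ∨ flag b (j + 1) ⊆ s)
    (hblock : (block b (j + 1)).Nonempty) :
    ¬ s ⊆ flag b j ↔ (s ∩ block b (j + 1)).Nonempty := by
  constructor
  · intro h
    obtain ⟨i, his, hi⟩ := not_subset.1 h
    rcases hcomp with h' | h'
    · refine ⟨i, mem_inter.2 ⟨his, mem_block.2 ?_⟩⟩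
      have := mem_flag.1 (h' his)
      have := mem_flag.not.1 hi
      omega
    · obtain ⟨i', hi'⟩ := hblock
      exact ⟨i', mem_inter.2 ⟨h' (block_subset_flag _ hi'), hi'⟩⟩
  · rintro ⟨i, hi⟩ h
    have := mem_flag.1 (h (mem_inter.1 hi).1)
    have := mem_block.1 (mem_inter.1 hi).2
    omega

lemma linkCone_subset_stackedCone (hρ : ∀ s, s ∈ ρ ↔ ∃ j ≤ k, flag b j = s)
    (hb : ∀ i, b i ≤ k) (hblock : ∀ j ≤ k, (block b j).Nonempty) :
    linkCone ρ ⊆ stackedCone b k := by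
  intro x hx
  refine ⟨hx.1, fun j hj => ?_⟩
  have hflag : ∀ s, faceCoeff x s ≠ 0 → ∀ j ≤ k,
      s ≠ flag b j ∧ (s ⊆ flag b j ∨ flag b j ⊆ s) := by
    intro s hs j hj
    rw [← Function.mem_support, ← support_sdCoord] at hs
    have h := hx.2 _ ((hρ _).2 ⟨j, hj, rfl⟩)
    exact ⟨fun he => hs (he ▸ h.1), (h.2 s hs).symm⟩
  have hmin : blockMin b x j = ∑ s with ¬ s ⊆ flag b j, faceCoeff x s := by
    rw [blockMin, dif_pos (hblock j hj)]
    conv_lhs => rw [← faceSum_faceCoeff hx.1]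
    rw [inf'_faceSum (faceCoeff_nonneg x) (isChain_support_faceCoeff x)]
    exact sum_filter_eq_of_support fun s hs => block_subset_iff_not_subset_flag
      (fun j' hj' => (hflag s hs j' (hj'.trans hj)).2) (hflag s hs j hj).1 (hblock j hj)
  rw [hmin]
  rcases hj.lt_or_eq with hjk | rfl
  · rw [blockMax, dif_pos (hblock _ hjk)]
    conv_rhs => rw [← faceSum_faceCoeff hx.1]
    rw [sup'_faceSum (faceCoeff_nonneg x) (isChain_support_faceCoeff x)]
    exact sum_filter_eq_of_support fun s hs =>
      not_subset_flag_iff (hflag s hs _ hjk).2 (hblock _ hjk)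
  · have hempty : ¬ (block b (j + 1)).Nonempty := fun ⟨i, hi⟩ => by
      have := hb i
      rw [mem_block.1 hi] at this
      omega
    rw [blockMax, dif_neg hempty, sum_eq_zero]
    intro s hs
    exact absurd (fun i _ => mem_flag.2 (hb i)) (mem_filter.1 hs).2

end Blocks

section Stacking

variable {ι : Type*} [Fintype ι] (b : ι → ℕ) (k : ℕ)

noncomputable def blockWidth (y : ι → ℝ) (l : ℕ) : ℝ := blockMax b y l - blockMin b y l

/-- Shifts each block of `y` so that its minimum becomes the total width of the blocks after it. -/
noncomputable def stackBlocks (y : ι → ℝ) (i : ι) : ℝ :=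
  y i - blockMin b y (b i) + ∑ l ∈ Ioc (b i) k, blockWidth b y l

variable {b k}

lemma blockMin_of_eq_add {x y : ι → ℝ} {c : ℝ} {j : ℕ} (hj : (block b j).Nonempty)
    (h : ∀ i, b i = j → x i = y i + c) : blockMin b x j = blockMin b y j + c := by
  rw [blockMin, blockMin, dif_pos hj, dif_pos hj,
    inf'_congr hj rfl fun i hi => h i (mem_block.1 hi)]
  exact (map_finset_inf' (OrderIso.addRight c) hj y).symm

lemma blockMax_of_eq_add {x y : ι → ℝ} {c : ℝ} {j : ℕ} (hj : (block b j).Nonempty)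
    (h : ∀ i, b i = j → x i = y i + c) : blockMax b x j = blockMax b y j + c := by
  rw [blockMax, blockMax, dif_pos hj, dif_pos hj,
    sup'_congr hj rfl fun i hi => h i (mem_block.1 hi)]
  exact (map_finset_sup' (OrderIso.addRight c) hj y).symm

lemma blockWidth_of_eq_add {x y : ι → ℝ} {c : ℝ} {j : ℕ} (hj : (block b j).Nonempty)
    (h : ∀ i, b i = j → x i = y i + c) : blockWidth b x j = blockWidth b y j := by
  rw [blockWidth, blockWidth, blockMin_of_eq_add hj h, blockMax_of_eq_add hj h]
  ring

lemma blockWidth_nonneg (y : ι → ℝ) (l : ℕ) : 0 ≤ blockWidth b y l :=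
  sub_nonneg.2 (blockMin_le_blockMax y l)

lemma block_eq_empty (hb : ∀ i, b i ≤ k) {j : ℕ} (hj : k < j) : block b j = ∅ :=
  eq_empty_of_forall_notMem fun i hi => (mem_block.1 hi ▸ hb i).not_gt hj

lemma blockMax_eq_zero (hb : ∀ i, b i ≤ k) (y : ι → ℝ) {j : ℕ} (hj : k < j) :
    blockMax b y j = 0 := by
  rw [blockMax, dif_neg (by rw [block_eq_empty hb hj]; exact not_nonempty_empty)]

lemma sum_blockWidth {x : ι → ℝ} (hx : x ∈ stackedCone b k) (hb : ∀ i, b i ≤ k) {j : ℕ}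
    (hj : j ≤ k) : ∑ l ∈ Ioc j k, blockWidth b x l = blockMin b x j := by
  induction hj using Nat.decreasingInduction with
  | self => rw [Ioc_self, sum_empty, hx.2 k le_rfl, blockMax_eq_zero hb x (Nat.lt_succ_self k)]
  | of_succ j hj ih =>
    rw [← sum_Ioc_consecutive _ (Nat.le_succ j) hj, Nat.Ioc_succ_singleton, sum_singleton, ih,
      blockWidth, sub_add_cancel, hx.2 j hj.le]

lemma stackBlocks_of_mem {x : ι → ℝ} (hx : x ∈ stackedCone b k) (hb : ∀ i, b i ≤ k) :
    stackBlocks b k x = x :=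
  funext fun i => by rw [stackBlocks, sum_blockWidth hx hb (hb i), sub_add_cancel]

lemma stackBlocks_sub_stackBlocks (y : ι → ℝ) {i i' : ι} (h : b i = b i') :
    stackBlocks b k y i - stackBlocks b k y i' = y i - y i' := by
  rw [stackBlocks, stackBlocks, h]
  ring

lemma continuous_blockMin (j : ℕ) : Continuous fun y : ι → ℝ => blockMin b y j := by
  unfold blockMin
  split_ifs with h
  · exact Continuous.finset_inf'_apply h fun i _ => continuous_apply i
  · exact continuous_const

lemma continuous_blockMax (j : ℕ) : Continuous fun y : ι → ℝ => blockMax b y j := by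
  unfold blockMax
  split_ifs with h
  · exact Continuous.finset_sup'_apply h fun i _ => continuous_apply i
  · exact continuous_const

lemma continuous_stackBlocks : Continuous (stackBlocks b k) :=
  continuous_pi fun i => ((continuous_apply i).sub (continuous_blockMin _)).add
    (continuous_finsetSum _ fun l _ => (continuous_blockMax l).sub (continuous_blockMin l))

section Nonempty

variable (hb : ∀ i, b i ≤ k) (hblock : ∀ j ≤ k, (block b j).Nonempty)
include hb hblock

lemma stackBlocks_mem (y : ι → ℝ) : stackBlocks b k y ∈ stackedCone b k := by
  have hshift : ∀ j ≤ k, ∀ i, b i = j → stackBlocks b k y i =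
      y i + (∑ l ∈ Ioc j k, blockWidth b y l - blockMin b y j) := by
    rintro j - i rfl
    rw [stackBlocks]
    ring
  have hmin : ∀ j ≤ k, blockMin b (stackBlocks b k y) j = ∑ l ∈ Ioc j k, blockWidth b y l :=
    fun j hj => by rw [blockMin_of_eq_add (hblock j hj) (hshift j hj), add_sub_cancel]
  refine ⟨fun i => (sum_nonneg fun l _ => blockWidth_nonneg y l).trans
    ((hmin (b i) (hb i)).symm.trans_le (blockMin_le _ i)), fun j hj => ?_⟩
  rw [hmin j hj]
  rcases hj.lt_or_eq with hjk | rfl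
  · rw [blockMax_of_eq_add (hblock _ hjk) (hshift _ hjk),
      ← sum_Ioc_consecutive _ (Nat.le_succ j) hjk, Nat.Ioc_succ_singleton, sum_singleton,
      blockWidth]
    ring
  · rw [Ioc_self, sum_empty, blockMax_eq_zero hb _ (Nat.lt_succ_self j)]

lemma stackBlocks_add_comp (y : ι → ℝ) (c : ℕ → ℝ) :
    stackBlocks b k (fun i => y i + c (b i)) = stackBlocks b k y := by
  have hshift : ∀ j ≤ k, ∀ i, b i = j → y i + c (b i) = y i + c j := by
    rintro j - i rfl
    rfl
  funext i
  rw [stackBlocks, stackBlocks, blockMin_of_eq_add (hblock _ (hb i)) (hshift _ (hb i)),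
    sum_congr rfl fun l hl => blockWidth_of_eq_add (hblock l (mem_Ioc.1 hl).2)
      (hshift l (mem_Ioc.1 hl).2)]
  ring

end Nonempty

end Stacking

section Pivots

variable {ι : Type*} (b : ι → ℕ) (piv : ℕ → ι)

noncomputable def extendNonPivot (z : {i // piv (b i) ≠ i} → ℝ) (i : ι) : ℝ :=
  if h : piv (b i) ≠ i then z ⟨i, h⟩ else 0

def toNonPivot (x : ι → ℝ) (a : {i // piv (b i) ≠ i}) : ℝ := x a - x (piv (b a))

variable {b piv} {k : ℕ}

lemma extendNonPivot_toNonPivot (x : ι → ℝ) :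
    extendNonPivot b piv (toNonPivot b piv x) = fun i => x i + -x (piv (b i)) := by
  funext i
  unfold extendNonPivot
  split_ifs with h
  · rw [toNonPivot, sub_eq_add_neg]
  · rw [not_not.1 h, add_neg_cancel]

lemma extendNonPivot_pivot (hb : ∀ i, b i ≤ k) (hpiv : ∀ j ≤ k, b (piv j) = j)
    (z : {i // piv (b i) ≠ i} → ℝ) (i : ι) : extendNonPivot b piv z (piv (b i)) = 0 :=
  dif_neg (not_not.2 (by rw [hpiv _ (hb i)]))

lemma continuous_extendNonPivot : Continuous (extendNonPivot b piv) := by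
  refine continuous_pi fun i => ?_
  unfold extendNonPivot
  split_ifs
  · exact continuous_apply _
  · exact continuous_const

lemma continuous_toNonPivot : Continuous (toNonPivot b piv) :=
  continuous_pi fun a => (continuous_apply a.1).sub (continuous_apply (piv (b a)))

variable [Fintype ι]

lemma block_nonempty (hpiv : ∀ j ≤ k, b (piv j) = j) {j : ℕ} (hj : j ≤ k) :
    (block b j).Nonempty :=
  ⟨piv j, mem_block.2 (hpiv j hj)⟩

variable (hb : ∀ i, b i ≤ k) (hpiv : ∀ j ≤ k, b (piv j) = j)
include hb hpiv

lemma toNonPivot_stackBlocks_extendNonPivot (z : {i // piv (b i) ≠ i} → ℝ) :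
    toNonPivot b piv (stackBlocks b k (extendNonPivot b piv z)) = z := by
  funext a
  rw [toNonPivot, stackBlocks_sub_stackBlocks _ (hpiv _ (hb a)).symm,
    extendNonPivot_pivot hb hpiv, sub_zero, extendNonPivot, dif_pos a.2]

lemma stackBlocks_extendNonPivot_toNonPivot {x : ι → ℝ} (hx : x ∈ stackedCone b k) :
    stackBlocks b k (extendNonPivot b piv (toNonPivot b piv x)) = x := by
  rw [extendNonPivot_toNonPivot, stackBlocks_add_comp hb (fun j hj => block_nonempty hpiv hj) x
    fun j => -x (piv j), stackBlocks_of_mem hx hb]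

noncomputable def stackedConeHomeomorph : stackedCone b k ≃ₜ ({i // piv (b i) ≠ i} → ℝ) where
  toFun x := toNonPivot b piv x
  invFun z := ⟨stackBlocks b k (extendNonPivot b piv z),
    stackBlocks_mem hb (fun _ hj => block_nonempty hpiv hj) _⟩
  left_inv x := Subtype.ext (stackBlocks_extendNonPivot_toNonPivot hb hpiv x.2)
  right_inv z := toNonPivot_stackBlocks_extendNonPivot hb hpiv z
  continuous_toFun := continuous_toNonPivot.comp continuous_subtype_val
  continuous_invFun := (continuous_stackBlocks.comp continuous_extendNonPivot).subtype_mk _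

lemma card_nonPivot : Nat.card {i // piv (b i) ≠ i} = Nat.card ι - (k + 1) := by
  let e : {i // piv (b i) = i} ≃ Fin (k + 1) :=
    ⟨fun i => ⟨b i, Nat.lt_succ_of_le (hb i)⟩,
      fun j => ⟨piv j, by rw [hpiv j (Nat.le_of_lt_succ j.2)]⟩, fun i => Subtype.ext i.2,
      fun j => Fin.ext (hpiv j (Nat.le_of_lt_succ j.2))⟩
  rw [Nat.card_eq_fintype_card, Nat.card_eq_fintype_card, Fintype.card_subtype_compl,
    Fintype.card_congr e, Fintype.card_fin]

end Pivots

section Softmax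

variable {l : ℕ}

noncomputable def softmax (z : Fin l → ℝ) (i : Fin (l + 1)) : ℝ :=
  Real.exp (Matrix.vecCons 0 z i) / ∑ j, Real.exp (Matrix.vecCons 0 z j)

noncomputable def logRatio (x : Fin (l + 1) → ℝ) (a : Fin l) : ℝ :=
  Real.log (x a.succ) - Real.log (x 0)

lemma sum_exp_vecCons_pos (z : Fin l → ℝ) : 0 < ∑ j, Real.exp (Matrix.vecCons 0 z j) :=
  sum_pos (fun _ _ => Real.exp_pos _) univ_nonempty

lemma softmax_mem (z : Fin l → ℝ) : softmax z ∈ openStdSimplex l :=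
  ⟨fun _ => div_pos (Real.exp_pos _) (sum_exp_vecCons_pos z), by
    simp only [softmax]
    rw [← sum_div, div_self (sum_exp_vecCons_pos z).ne']⟩

lemma logRatio_softmax (z : Fin l → ℝ) : logRatio (softmax z) = z := by
  funext a
  have hS := (sum_exp_vecCons_pos z).ne'
  rw [logRatio, softmax, softmax, Real.log_div (Real.exp_pos _).ne' hS,
    Real.log_div (Real.exp_pos _).ne' hS, Real.log_exp, Real.log_exp, Matrix.cons_val_succ,
    Matrix.cons_val_zero]
  ring

lemma softmax_logRatio {x : Fin (l + 1) → ℝ} (hx : x ∈ openStdSimplex l) :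
    softmax (logRatio x) = x := by
  have hexp : ∀ i, Real.exp (Matrix.vecCons 0 (logRatio x) i) = x i / x 0 := by
    refine Fin.cases ?_ fun a => ?_
    · rw [Matrix.cons_val_zero, Real.exp_zero, div_self (hx.1 0).ne']
    · rw [Matrix.cons_val_succ, logRatio, Real.exp_sub, Real.exp_log (hx.1 _),
        Real.exp_log (hx.1 0)]
  funext i
  rw [softmax, hexp, sum_congr rfl fun j _ => hexp j, ← sum_div, hx.2]
  field_simp [(hx.1 0).ne']

noncomputable def softmaxHomeomorph (l : ℕ) : (Fin l → ℝ) ≃ₜ openStdSimplex l where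
  toFun z := ⟨softmax z, softmax_mem z⟩
  invFun x := logRatio x
  left_inv := logRatio_softmax
  right_inv x := Subtype.ext (softmax_logRatio x.2)
  continuous_toFun := by
    have hexp : ∀ i, Continuous fun z : Fin l → ℝ => Real.exp (Matrix.vecCons 0 z i) := fun i =>
      Real.continuous_exp.comp ((continuous_apply i).comp
        (continuous_const.matrixVecCons continuous_id))
    exact (continuous_pi fun i => (hexp i).div (continuous_finsetSum _ fun j _ => hexp j)
      fun z => (sum_exp_vecCons_pos z).ne').subtype_mk _
  continuous_invFun := continuous_pi fun a =>
    (((continuous_apply _).comp continuous_subtype_val).log fun x => (x.2.1 _).ne').sub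
      (((continuous_apply _).comp continuous_subtype_val).log fun x => (x.2.1 _).ne')

end Softmax

section Flags

variable {ι : Type*} [Fintype ι] {k : ℕ}

theorem linkCone_eq_stackedCone {b : ι → ℕ} {ρ : Finset (Finset ι)}
    (hρ : ∀ s, s ∈ ρ ↔ ∃ j ≤ k, flag b j = s) (hb : ∀ i, b i ≤ k)
    (hblock : ∀ j ≤ k, (block b j).Nonempty) : linkCone ρ = stackedCone b k :=
  (linkCone_subset_stackedCone hρ hb hblock).antisymm (stackedCone_subset_linkCone hρ hb hblock)

lemma exists_flag_eq_of_strictMono {S : Fin (k + 1) → Finset ι} (hS : StrictMono S)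
    (h0 : (S 0).Nonempty) (htop : S (Fin.last k) = univ) :
    ∃ (b : ι → ℕ) (piv : ℕ → ι), (∀ i, b i ≤ k) ∧ (∀ j ≤ k, b (piv j) = j) ∧
      ∀ j : Fin (k + 1), S j = flag b j := by
  have hex : ∀ i, ∃ j, ∃ h : j < k + 1, i ∈ S ⟨j, h⟩ := fun i =>
    ⟨k, k.lt_succ_self, htop ▸ mem_univ i⟩
  set b := fun i => Nat.find (hex i)
  have hmem : ∀ i (j : Fin (k + 1)), i ∈ S j ↔ b i ≤ j := fun i j =>
    ⟨fun h => Nat.find_min' (hex i) ⟨j.2, h⟩, fun h => by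
      obtain ⟨hlt, hi⟩ := Nat.find_spec (hex i)
      exact hS.monotone (Fin.mk_le_mk.2 h) hi⟩
  have hpivot : ∀ j, ∃ i, j ≤ k → b i = j := by
    intro j
    obtain ⟨i₀, hi₀⟩ := h0
    rcases Nat.eq_zero_or_pos j with rfl | hj
    · exact ⟨i₀, fun _ => Nat.le_zero.1 ((hmem i₀ 0).1 hi₀)⟩
    by_cases hjk : j ≤ k
    · obtain ⟨i, hi, hi'⟩ := exists_of_ssubset (hS (Fin.mk_lt_mk.2 (Nat.sub_lt hj one_pos) :
        (⟨j - 1, by omega⟩ : Fin (k + 1)) < ⟨j, by omega⟩))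
      refine ⟨i, fun _ => ?_⟩
      have h1 := (hmem i _).1 hi
      have h2 := (hmem i _).not.1 hi'
      simp only at h1 h2
      omega
    · exact ⟨i₀, fun h => absurd h hjk⟩
  choose piv hpiv using hpivot
  exact ⟨b, piv, fun i => (hmem i (Fin.last k)).1 (htop ▸ mem_univ i), hpiv,
    fun j => ext fun i => (hmem i j).trans mem_flag.symm⟩

end Flags

theorem stmt19_general (m k : ℕ)
    (S : Fin (k + 1) → Finset (Fin (m + 1))) (hS : StrictMono S)
    (hne : ∀ j, (S j).Nonempty) (htop : S (Fin.last k) = Finset.univ) :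
    Nonempty ((openDualCell m (Finset.image S Finset.univ)) ≃ₜ
      (openStdSimplex (m - k))) := by
  obtain ⟨b, piv, hb, hpiv, hSb⟩ := exists_flag_eq_of_strictMono hS (hne 0) htop
  have hρ : isSdSimplex m (image S univ) := ⟨univ_nonempty.image S,
    forall_mem_image.2 fun j _ => hne j, hS.monotone.isChain_range.mono (by simp)⟩
  have hflags : ∀ s, s ∈ image S univ ↔ ∃ j ≤ k, flag b j = s := fun s => by
    simp only [mem_image, mem_univ, true_and, hSb]
    exact ⟨fun ⟨j, hj⟩ => ⟨j, Nat.le_of_lt_succ j.2, hj⟩,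
      fun ⟨j, hj, hs⟩ => ⟨⟨j, Nat.lt_succ_of_le hj⟩, hs⟩⟩
  have hcard : Nat.card {i // piv (b i) ≠ i} = m - k := by
    rw [card_nonPivot hb hpiv, Nat.card_eq_fintype_card, Fintype.card_fin, Nat.add_sub_add_right]
  exact ⟨(Homeomorph.setCongr (openDualCell_eq_dualCellCoords hρ)).trans <|
    (dualCellHomeomorphLinkCone (mem_image_of_mem S (mem_univ 0))
      (empty_notMem_of_isSdSimplex hρ) hρ.2.2).trans <|
    (Homeomorph.setCongr (linkCone_eq_stackedCone hflags hb fun _ => block_nonempty hpiv)).trans <|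
    (stackedConeHomeomorph hb hpiv).trans <|
    (Homeomorph.piCongrLeft (Finite.equivFinOfCardEq hcard)).trans (softmaxHomeomorph (m - k))⟩

/-- for a chain `τ₀ < … < τ_k` of faces of the `m`-simplex `τ_k` (the top
face), the open dual cell `D̊(τ̂₀…τ̂ₖ, Sd τ_k)` is (PL-)homeomorphic to the open simplex
`Δ̊^{m−k}` of dimension `m − k`. -/
theorem stmt19 (m k : ℕ) (hk : k ≤ m)
    (S : Fin (k + 1) → Finset (Fin (m + 1))) (hS : StrictMono S)
    (hne : ∀ j, (S j).Nonempty) (htop : S (Fin.last k) = Finset.univ) :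
    Nonempty ((openDualCell m (Finset.image S Finset.univ)) ≃ₜ
      (openStdSimplex (m - k))) :=
  stmt19_general m k S hS hne htop
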